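/- arXiv:1202.2914 — 6 statements merged into one kernel-verified Lean document; each statement's English description precedes it below -/
import Mathlib

section
/- Lemma 1 (ta to vb arrival curves). Suppose a flow A has a ta stochastic arrival curve, A ~_ta <f, α>, and let δ > 0 be such that the function f̃(x) := Σ_{k=0}^∞ f(x + kδ) is finite for every x ≥ 0. Then A has a vb stochastic arrival curve A ~_vb <f̃, α_δ>, where α_δ(t) := α(t) + δ·t; that is, for all t ≥ 0 and all x ≥ 0, P{ max_{0≤s≤t} [A(s,t) − α_δ(t−s)] > x } ≤ f̃(x). -/
open MeasureTheory Filter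

/-! A path exceeds `x` in the `α_δ`-envelope only if for some `s ≤ t` the increment `A(s,t)`
exceeds `α(t - s)` by more than `x + (t - s)δ`. The union bound over `s` and the ta bound then give
`∑_{s ≤ t} f(x + (t - s)δ)`, a partial sum of the series defining `f̃(x)`. -/

theorem measure_sup'_gt_le_sum {Ω ι β : Type*} [MeasurableSpace Ω] (μ : Measure Ω)
    [LinearOrder β] (s : Finset ι) (hs : s.Nonempty) (g : ι → Ω → β) (x : β) :
    μ {ω | s.sup' hs (fun i => g i ω) > x} ≤ ∑ i ∈ s, μ {ω | g i ω > x} := by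
  have hunion : {ω | s.sup' hs (fun i => g i ω) > x} = ⋃ i ∈ s, {ω | g i ω > x} := by
    ext ω
    simp [Finset.lt_sup'_iff]
  rw [hunion]
  exact measure_biUnion_finset_le s _

theorem ENNReal.sum_ofReal_le_ofReal_tsum {ι : Type*} {g : ι → ℝ} (hg : ∀ i, 0 ≤ g i)
    (hsum : Summable g) (s : Finset ι) :
    ∑ i ∈ s, ENNReal.ofReal (g i) ≤ ENNReal.ofReal (∑' i, g i) := by
  rw [ENNReal.ofReal_tsum_of_nonneg hg hsum]
  exact ENNReal.sum_le_tsum s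

theorem ta_to_vb_arrival_curve_general
    {Ω : Type*} [MeasurableSpace Ω] (P : Measure Ω)
    (A : ℕ → Ω → ℝ)
    (α : ℕ → ℝ) (f : ℝ → ℝ)
    (hfnonneg : ∀ x, 0 ≤ f x)
    (hta : ∀ s t : ℕ, s ≤ t → ∀ x : ℝ, 0 ≤ x →
      P {ω | A t ω - A s ω - α (t - s) > x} ≤ ENNReal.ofReal (f x))
    (δ : ℝ) (hδ : 0 < δ)
    (hsum : ∀ x : ℝ, 0 ≤ x → Summable fun k : ℕ => f (x + k * δ)) :
    ∀ t : ℕ, ∀ x : ℝ, 0 ≤ x →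
      P {ω | (Finset.range (t + 1)).sup' ⟨0, Finset.mem_range.mpr (Nat.succ_pos t)⟩
          (fun s => A t ω - A s ω - (α (t - s) + δ * ((t - s : ℕ) : ℝ))) > x}
        ≤ ENNReal.ofReal (∑' k : ℕ, f (x + k * δ)) := by
  intro t x hx
  have hshift (s : ℕ) (hs : s ≤ t) :
      P {ω | A t ω - A s ω - (α (t - s) + δ * ((t - s : ℕ) : ℝ)) > x}
        ≤ ENNReal.ofReal (f (x + ((t - s : ℕ) : ℝ) * δ)) := by
    refine le_trans (measure_mono fun ω hω => ?_) (hta s t hs _ (by positivity))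
    simp only [Set.mem_ofPred_eq] at hω ⊢
    linarith
  calc _ ≤ ∑ s ∈ Finset.range (t + 1),
          P {ω | A t ω - A s ω - (α (t - s) + δ * ((t - s : ℕ) : ℝ)) > x} :=
        measure_sup'_gt_le_sum P _ _ _ x
    _ ≤ ∑ s ∈ Finset.range (t + 1), ENNReal.ofReal (f (x + ((t - s : ℕ) : ℝ) * δ)) :=
        Finset.sum_le_sum fun s hs => hshift s (Nat.lt_succ_iff.mp (Finset.mem_range.mp hs))
    _ = ∑ k ∈ Finset.range (t + 1), ENNReal.ofReal (f (x + k * δ)) :=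
        Finset.sum_range_reflect (fun k => ENNReal.ofReal (f (x + k * δ))) (t + 1)
    _ ≤ ENNReal.ofReal (∑' k : ℕ, f (x + k * δ)) :=
        ENNReal.sum_ofReal_le_ofReal_tsum (fun _ => hfnonneg _) (hsum x hx) _

/-- **Lemma 1 (ta to vb arrival curves).**
If a flow `A` has a ta stochastic arrival curve `⟨f, α⟩` and `δ > 0` is such that
`f̃(x) := ∑_{k=0}^∞ f(x + kδ)` is finite for every `x ≥ 0`, then `A` has the vb stochastic
arrival curve `⟨f̃, α_δ⟩`, where `α_δ(t) = α(t) + δ·t`. -/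
theorem ta_to_vb_arrival_curve
    {Ω : Type*} [MeasurableSpace Ω] (P : Measure Ω) [IsProbabilityMeasure P]
    (A : ℕ → Ω → ℝ)
    (hA0 : ∀ ω, A 0 ω = 0)
    (hAnonneg : ∀ t ω, 0 ≤ A t ω)
    (hAmono : ∀ ω, Monotone fun t => A t ω)
    (α : ℕ → ℝ) (f : ℝ → ℝ)
    (hαnonneg : ∀ t, 0 ≤ α t) (hαmono : Monotone α)
    (hfnonneg : ∀ x, 0 ≤ f x) (hfanti : Antitone f)
    (hta : ∀ s t : ℕ, s ≤ t → ∀ x : ℝ, 0 ≤ x →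
      P {ω | A t ω - A s ω - α (t - s) > x} ≤ ENNReal.ofReal (f x))
    (δ : ℝ) (hδ : 0 < δ)
    (hsum : ∀ x : ℝ, 0 ≤ x → Summable fun k : ℕ => f (x + k * δ)) :
    ∀ t : ℕ, ∀ x : ℝ, 0 ≤ x →
      P {ω | (Finset.range (t + 1)).sup' ⟨0, Finset.mem_range.mpr (Nat.succ_pos t)⟩
          (fun s => A t ω - A s ω - (α (t - s) + δ * ((t - s : ℕ) : ℝ))) > x}
        ≤ ENNReal.ofReal (∑' k : ℕ, f (x + k * δ)) :=
  ta_to_vb_arrival_curve_general P A α f hfnonneg hta δ hδ hsum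
end

section
/- Theorem 1 (Jiang's leftover stochastic service curve). Suppose a server is a stochastic strict server with ideal service curve β̂ ∈ F and impairment process I, fed by a flow with arrival process A and departure process A*. If I has a vb stochastic arrival curve, I ~_vb <g, γ>, then the server provides the flow the (weak) stochastic service curve S ~ <g, β> with β(t) = β̂(t) − γ(t); that is, for all t ≥ 0 and all x ≥ 0, P{ min_{0≤s≤t} [A(s) + β̂(t−s) − γ(t−s)] − A*(t) > x } ≤ g(x). -/
/-!
Fix a sample path and a time `t`, and let `s ≤ t` be the last time at which the backlog
vanishes (it does at `0`).  Then `(s, t]` is a backlogged period, so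
`A*(t) = A(s) + A*(s, t) ≥ A(s) + β̂(t - s) - I(s, t)`, whence
`min_u [A(u) + β̂(t - u) - γ(t - u)] - A*(t) ≤ I(s, t) - γ(t - s)`, which is at most the
supremum controlled by `I ~_vb ⟨g, γ⟩`.  The event of the theorem is therefore contained in the
event bounded by the vb hypothesis.
-/

open MeasureTheory

namespace NetworkCalculus

def IsStrictServerPath (A Astar I βhat : ℕ → ℝ) : Prop :=
  ∀ s t : ℕ, s ≤ t → (∀ u, s < u → u ≤ t → 0 < A u - Astar u) →
    βhat (t - s) - (I t - I s) ≤ Astar t - Astar s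

variable {A Astar : ℕ → ℝ}

theorem exists_last_idle_le (hidle : A 0 = Astar 0) (hle : ∀ u, Astar u ≤ A u) (t : ℕ) :
    ∃ s ≤ t, A s = Astar s ∧ ∀ u, s < u → u ≤ t → 0 < A u - Astar u := by
  classical
  let idle : ℕ → Prop := fun s => A s = Astar s
  refine ⟨Nat.findGreatest idle t, Nat.findGreatest_le t,
    Nat.findGreatest_spec (P := idle) (Nat.zero_le t) hidle, fun u hsu hut => ?_⟩
  have hne : A u ≠ Astar u := Nat.findGreatest_is_greatest hsu hut
  exact sub_pos.mpr (lt_of_le_of_ne (hle u) hne.symm)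

theorem inf'_sub_le_sup'_of_isStrictServerPath {I βhat : ℕ → ℝ} (γ : ℕ → ℝ)
    (hidle : A 0 = Astar 0) (hle : ∀ u, Astar u ≤ A u)
    (hserver : IsStrictServerPath A Astar I βhat) (t : ℕ) :
    (Finset.range (t + 1)).inf' Finset.nonempty_range_add_one
        (fun s => A s + (βhat (t - s) - γ (t - s))) - Astar t ≤
      (Finset.range (t + 1)).sup' Finset.nonempty_range_add_one
        (fun s => I t - I s - γ (t - s)) := by
  obtain ⟨s, hst, hidle_s, hbacklog⟩ := exists_last_idle_le hidle hle t
  have hs : s ∈ Finset.range (t + 1) := Finset.mem_range.mpr (Nat.lt_succ_of_le hst)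
  have hserved := hserver s t hst hbacklog
  have hinf := Finset.inf'_le (fun s => A s + (βhat (t - s) - γ (t - s))) hs
  have hsup := Finset.le_sup' (fun s => I t - I s - γ (t - s)) hs
  linarith

end NetworkCalculus

theorem jiang_leftover_service_curve_general
    {Ω : Type*} [MeasurableSpace Ω] (P : Measure Ω)
    (A Astar I : ℕ → Ω → ℝ)
    -- A is a process
    (hA0 : ∀ ω, A 0 ω = 0)
    -- A* is a process with A* ≤ A
    (hAstar0 : ∀ ω, Astar 0 ω = 0)
    (hAstar_le : ∀ t ω, Astar t ω ≤ A t ω)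
    (βhat : ℕ → ℝ)
    -- stochastic strict server: during every backlogged period (s, t],
    -- A*(s,t) ≥ β̂(t−s) − I(s,t)
    (hserver : ∀ ω, ∀ s t : ℕ, s ≤ t →
      (∀ u, s < u → u ≤ t → 0 < A u ω - Astar u ω) →
      βhat (t - s) - (I t ω - I s ω) ≤ Astar t ω - Astar s ω)
    (γ : ℕ → ℝ) (g : ℝ → ℝ)
    -- I ~_vb <g, γ>
    (hvb : ∀ t : ℕ, ∀ x : ℝ, 0 ≤ x →
      P {ω | (Finset.range (t + 1)).sup' Finset.nonempty_range_add_one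
          (fun s => I t ω - I s ω - γ (t - s)) > x} ≤ ENNReal.ofReal (g x)) :
    -- S ~ <g, β> with β(t) = β̂(t) − γ(t)
    ∀ t : ℕ, ∀ x : ℝ, 0 ≤ x →
      P {ω | (Finset.range (t + 1)).inf' Finset.nonempty_range_add_one
          (fun s => A s ω + (βhat (t - s) - γ (t - s))) - Astar t ω > x}
        ≤ ENNReal.ofReal (g x) := by
  intro t x hx
  refine le_trans (measure_mono fun ω (hω : _ > x) => ?_) (hvb t x hx)
  exact lt_of_lt_of_le hω <| NetworkCalculus.inf'_sub_le_sup'_of_isStrictServerPath γ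
    ((hA0 ω).trans (hAstar0 ω).symm) (hAstar_le · ω) (hserver ω) t

/-- **Theorem 1 (Jiang's leftover stochastic service curve).**
Suppose a server is a stochastic strict server with ideal service curve `β̂` and impairment
process `I`, fed by a flow with arrivals `A` and departures `A*`.  If `I` has a vb stochastic
arrival curve `⟨g, γ⟩`, then the server provides the (weak) stochastic service curve
`⟨g, β⟩` with `β(t) = β̂(t) − γ(t)`. -/
theorem jiang_leftover_service_curve
    {Ω : Type*} [MeasurableSpace Ω] (P : Measure Ω) [IsProbabilityMeasure P]
    (A Astar I : ℕ → Ω → ℝ)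
    -- A is a process
    (hA0 : ∀ ω, A 0 ω = 0)
    (hAnonneg : ∀ t ω, 0 ≤ A t ω)
    (hAmono : ∀ ω, Monotone fun t => A t ω)
    -- A* is a process with A* ≤ A
    (hAstar0 : ∀ ω, Astar 0 ω = 0)
    (hAstarnonneg : ∀ t ω, 0 ≤ Astar t ω)
    (hAstarmono : ∀ ω, Monotone fun t => Astar t ω)
    (hAstar_le : ∀ t ω, Astar t ω ≤ A t ω)
    -- I is a process
    (hI0 : ∀ ω, I 0 ω = 0)
    (hInonneg : ∀ t ω, 0 ≤ I t ω)
    (hImono : ∀ ω, Monotone fun t => I t ω)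
    (βhat : ℕ → ℝ) (hβhat_nonneg : ∀ t, 0 ≤ βhat t) (hβhat_mono : Monotone βhat)
    -- stochastic strict server: during every backlogged period (s, t],
    -- A*(s,t) ≥ β̂(t−s) − I(s,t)
    (hserver : ∀ ω, ∀ s t : ℕ, s ≤ t →
      (∀ u, s < u → u ≤ t → 0 < A u ω - Astar u ω) →
      βhat (t - s) - (I t ω - I s ω) ≤ Astar t ω - Astar s ω)
    (γ : ℕ → ℝ) (g : ℝ → ℝ)
    (hγnonneg : ∀ t, 0 ≤ γ t) (hγmono : Monotone γ)
    (hgnonneg : ∀ x, 0 ≤ g x) (hganti : Antitone g)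
    -- I ~_vb <g, γ>
    (hvb : ∀ t : ℕ, ∀ x : ℝ, 0 ≤ x →
      P {ω | (Finset.range (t + 1)).sup' Finset.nonempty_range_add_one
          (fun s => I t ω - I s ω - γ (t - s)) > x} ≤ ENNReal.ofReal (g x)) :
    -- S ~ <g, β> with β(t) = β̂(t) − γ(t)
    ∀ t : ℕ, ∀ x : ℝ, 0 ≤ x →
      P {ω | (Finset.range (t + 1)).inf' Finset.nonempty_range_add_one
          (fun s => A s ω + (βhat (t - s) - γ (t - s))) - Astar t ω > x}
        ≤ ENNReal.ofReal (g x) :=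
  jiang_leftover_service_curve_general P A Astar I hA0 hAstar0 hAstar_le βhat hserver γ g hvb
end

section
/- Theorem 5, vb part (arrival curves from (σ(θ), ρ(θ))-upper constrained processes). Suppose the process A is (σ(θ), ρ(θ))-upper constrained for some θ > 0. Then for any r > ρ(θ), A has a vb stochastic arrival curve A ~_vb <f, α> with α(t) = r·t and f(x) = (e^{θσ(θ)} / (1 − e^{θ(ρ(θ)−r)})) · e^{−θx}; that is, for all t ≥ 0 and all x ≥ 0, P{ max_{0≤s≤t} [A(s,t) − r(t−s)] > x } ≤ (e^{θσ(θ)} / (1 − e^{θ(ρ(θ)−r)})) e^{−θx}. -/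
/-!
By Chernoff's bound, the upper constraint gives for each `s ≤ t`
`P{A(s,t) > x + r(t-s)} ≤ e^{θσ} q^{t-s} e^{-θx}` with `q = e^{θ(ρ-r)} < 1`.
The event that the maximum exceeds `x` is the union of these events over `s`, and the union
bound sums the geometric series `∑ q^{t-s} ≤ 1/(1-q)`.
-/

open MeasureTheory ProbabilityTheory Real Finset

theorem le_exp_mul_of_one_div_mul_log_le {θ a c : ℝ} (hθ : 0 < θ) (h : 1 / θ * log a ≤ c) :
    a ≤ exp (θ * c) := by
  rcases le_or_gt a 0 with ha | ha
  · exact ha.trans (exp_pos _).le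
  · rw [one_div, inv_mul_le_iff₀ hθ] at h
    exact (le_exp_log a).trans (exp_le_exp.mpr h)

theorem measure_lt_le_exp_of_log_mgf_le {Ω : Type*} [MeasurableSpace Ω] {μ : Measure Ω}
    [IsFiniteMeasure μ] {X : Ω → ℝ} {θ c : ℝ} (hθ : 0 < θ)
    (hint : Integrable (fun ω => exp (θ * X ω)) μ) (hmgf : 1 / θ * log (mgf X μ θ) ≤ c) (y : ℝ) :
    μ {ω | y < X ω} ≤ ENNReal.ofReal (exp (θ * (c - y))) := calc
  μ {ω | y < X ω} ≤ μ {ω | y ≤ X ω} := measure_mono fun _ (hω : y < _) => hω.le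
  _ = ENNReal.ofReal (μ.real {ω | y ≤ X ω}) := (ofReal_measureReal (measure_ne_top _ _)).symm
  _ ≤ ENNReal.ofReal (exp (-θ * y) * exp (θ * c)) := by
    gcongr
    exact (measure_ge_le_exp_mul_mgf y hθ.le hint).trans <| by
      gcongr; exact le_exp_mul_of_one_div_mul_log_le hθ hmgf
  _ = ENNReal.ofReal (exp (θ * (c - y))) := by rw [← exp_add]; ring_nf

theorem measure_lt_sup'_le_sum {Ω ι α : Type*} [MeasurableSpace Ω] [LinearOrder α]
    (μ : Measure Ω) (s : Finset ι) (hs : s.Nonempty) (f : ι → Ω → α) (x : α) :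
    μ {ω | x < s.sup' hs fun i => f i ω} ≤ ∑ i ∈ s, μ {ω | x < f i ω} := by
  have hunion : {ω | x < s.sup' hs fun i => f i ω} = ⋃ i ∈ s, {ω | x < f i ω} := by
    ext ω
    simp only [Set.mem_ofPred_eq, Finset.lt_sup'_iff, Set.mem_iUnion, exists_prop]
  rw [hunion]
  exact measure_biUnion_finset_le s _

theorem sum_range_pow_sub_le_inv_one_sub {q : ℝ} (hq0 : 0 ≤ q) (hq1 : q < 1) (t : ℕ) :
    ∑ s ∈ range (t + 1), q ^ (t - s) ≤ (1 - q)⁻¹ := by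
  have hreflect := sum_range_reflect (fun k => q ^ k) (t + 1)
  simp only [Nat.add_sub_cancel] at hreflect
  rw [hreflect, range_eq_Ico, inv_eq_one_div, ← pow_zero q]
  exact geom_sum_Ico_le_of_lt_one hq0 hq1

theorem vb_arrival_curve_of_upper_constrained_general
    {Ω : Type*} [MeasurableSpace Ω] (P : Measure Ω) [IsProbabilityMeasure P]
    (A : ℕ → Ω → ℝ)
    (θ σ ρ : ℝ) (hθ : 0 < θ)
    (hInt : ∀ s t : ℕ, s ≤ t → Integrable (fun ω => Real.exp (θ * (A t ω - A s ω))) P)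
    -- A is (σ(θ), ρ(θ))-upper constrained
    (hconstr : ∀ s t : ℕ, s ≤ t →
      (1 / θ) * Real.log (∫ ω, Real.exp (θ * (A t ω - A s ω)) ∂P)
        ≤ ρ * ((t - s : ℕ) : ℝ) + σ)
    (r : ℝ) (hr : ρ < r) :
    ∀ t : ℕ, ∀ x : ℝ, 0 ≤ x →
      P {ω | (Finset.range (t + 1)).sup' Finset.nonempty_range_add_one
          (fun s => A t ω - A s ω - r * ((t - s : ℕ) : ℝ)) > x}
        ≤ ENNReal.ofReal
            (Real.exp (θ * σ) / (1 - Real.exp (θ * (ρ - r))) * Real.exp (-θ * x)) := by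
  intro t x _
  set q := exp (θ * (ρ - r))
  have hq1 : q < 1 := exp_lt_one_iff.mpr (mul_neg_of_pos_of_neg hθ (sub_neg.mpr hr))
  have hterm : ∀ s ∈ range (t + 1), P {ω | x < A t ω - A s ω - r * ((t - s : ℕ) : ℝ)}
      ≤ ENNReal.ofReal (exp (θ * σ) * q ^ (t - s) * exp (-θ * x)) := by
    intro s hs
    have hst : s ≤ t := Nat.lt_succ_iff.mp (mem_range.mp hs)
    have hevent : {ω | x < A t ω - A s ω - r * ((t - s : ℕ) : ℝ)}
        = {ω | x + r * ((t - s : ℕ) : ℝ) < A t ω - A s ω} := by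
      ext; simp only [Set.mem_ofPred_eq, lt_sub_iff_add_lt]
    rw [hevent]
    refine (measure_lt_le_exp_of_log_mgf_le hθ (hInt s t hst) (hconstr s t hst) _).trans_eq ?_
    rw [← exp_nat_mul, ← exp_add, ← exp_add]
    ring_nf
  calc _ ≤ ∑ s ∈ range (t + 1), P {ω | x < A t ω - A s ω - r * ((t - s : ℕ) : ℝ)} :=
        measure_lt_sup'_le_sum P _ _ _ x
    _ ≤ ∑ s ∈ range (t + 1), ENNReal.ofReal (exp (θ * σ) * q ^ (t - s) * exp (-θ * x)) :=
        sum_le_sum hterm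
    _ = ENNReal.ofReal (exp (θ * σ) * (∑ s ∈ range (t + 1), q ^ (t - s)) * exp (-θ * x)) := by
        rw [← ENNReal.ofReal_sum_of_nonneg fun s _ => by positivity, mul_sum, sum_mul]
    _ ≤ ENNReal.ofReal (exp (θ * σ) / (1 - q) * exp (-θ * x)) := by
        rw [div_eq_mul_inv]
        gcongr
        exact sum_range_pow_sub_le_inv_one_sub (exp_pos _).le hq1 t

/-- **Theorem 5, vb part (arrival curves from `(σ(θ), ρ(θ))`-upper constrained processes).**
If the process `A` is `(σ(θ), ρ(θ))`-upper constrained for some `θ > 0`, then for any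
`r > ρ(θ)`, `A` has the vb stochastic arrival curve `α(t) = r·t`,
`f(x) = (e^{θσ(θ)} / (1 − e^{θ(ρ(θ)−r)})) e^{−θx}`. -/
theorem vb_arrival_curve_of_upper_constrained
    {Ω : Type*} [MeasurableSpace Ω] (P : Measure Ω) [IsProbabilityMeasure P]
    (A : ℕ → Ω → ℝ)
    (hA0 : ∀ ω, A 0 ω = 0)
    (hAnonneg : ∀ t ω, 0 ≤ A t ω)
    (hAmono : ∀ ω, Monotone fun t => A t ω)
    (θ σ ρ : ℝ) (hθ : 0 < θ)
    (hInt : ∀ s t : ℕ, s ≤ t → Integrable (fun ω => Real.exp (θ * (A t ω - A s ω))) P)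
    -- A is (σ(θ), ρ(θ))-upper constrained
    (hconstr : ∀ s t : ℕ, s ≤ t →
      (1 / θ) * Real.log (∫ ω, Real.exp (θ * (A t ω - A s ω)) ∂P)
        ≤ ρ * ((t - s : ℕ) : ℝ) + σ)
    (r : ℝ) (hr : ρ < r) :
    ∀ t : ℕ, ∀ x : ℝ, 0 ≤ x →
      P {ω | (Finset.range (t + 1)).sup' Finset.nonempty_range_add_one
          (fun s => A t ω - A s ω - r * ((t - s : ℕ) : ℝ)) > x}
        ≤ ENNReal.ofReal
            (Real.exp (θ * σ) / (1 - Real.exp (θ * (ρ - r))) * Real.exp (-θ * x)) :=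
  vb_arrival_curve_of_upper_constrained_general P A θ σ ρ hθ hInt hconstr r hr
end

section
/- Proposition 1 (vb arrival curves of time-independent processes). Suppose the process A is (σ(θ), ρ(θ))-upper constrained for some θ > 0, and suppose the per-slot increments a(t) := A(t) − A(t−1), t ≥ 1, are mutually independent random variables. Then for any r ≥ ρ(θ) + σ(θ), A has a vb stochastic arrival curve A ~_vb <f, α> with α(t) = r·t and f(x) = e^{−θx}; that is, for all t ≥ 0 and all x ≥ 0, P{ max_{0≤s≤t} [A(s,t) − r(t−s)] > x } ≤ e^{−θx}. -/
/-!
Write `Y i = exp (θ (a(i+1) - r))` for the shifted increments. The constraint on a single slot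
gives `E[Y i] ≤ 1`, and reading the increments backwards from `t`, the quantity
`exp (θ (A(s,t) - r (t - s)))` is the product of the first `t - s` factors. Products of
independent factors of mean at most `1` form a nonnegative supermartingale started at `1`, so by
Ville's maximal inequality the probability that one of them reaches `e^{θx}` is at most `e^{-θx}`.
-/

open MeasureTheory ProbabilityTheory

open scoped ENNReal

noncomputable section

namespace ProbabilityTheory

variable {Ω ι : Type*} {mΩ : MeasurableSpace Ω} {P : Measure Ω}

section StoppedProd

variable (Y : ι → Ω → ℝ≥0∞) (e : ℕ → ι) (c : ℝ≥0∞)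

/-- The running product `∏_{i<n} Y (e i)`, frozen from the first time it reaches `c`. -/
def stoppedProd : ℕ → Ω → ℝ≥0∞
  | 0, _ => 1
  | n + 1, ω => if stoppedProd n ω < c then stoppedProd n ω * Y (e n) ω else stoppedProd n ω

abbrev factorSigma (n : ℕ) : MeasurableSpace Ω :=
  ⨆ i ∈ e '' Set.Iio n, MeasurableSpace.comap (Y i) inferInstance

variable {Y e c}

lemma factorSigma_mono {m n : ℕ} (h : m ≤ n) : factorSigma Y e m ≤ factorSigma Y e n :=
  biSup_mono fun _ hi => Set.image_mono (Set.Iio_subset_Iio h) hi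

lemma factorSigma_le (hY : ∀ i, Measurable (Y i)) (n : ℕ) : factorSigma Y e n ≤ mΩ :=
  iSup₂_le fun i _ => (hY i).comap_le

lemma measurable_factorSigma_factor (n : ℕ) : Measurable[factorSigma Y e (n + 1)] (Y (e n)) :=
  (comap_measurable (Y (e n))).mono
    (le_biSup (fun i => MeasurableSpace.comap (Y i) inferInstance)
      (Set.mem_image_of_mem e (Set.mem_Iio.mpr n.lt_succ_self))) le_rfl

lemma measurable_stoppedProd (n : ℕ) : Measurable[factorSigma Y e n] (stoppedProd Y e c n) := by
  induction n with
  | zero => exact measurable_const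
  | succ n ih =>
    have ih' := ih.mono (factorSigma_mono n.le_succ) le_rfl
    exact Measurable.ite (measurableSet_lt ih' measurable_const)
      (ih'.mul (measurable_factorSigma_factor n)) ih'

lemma stoppedProd_eq_prod {n : ℕ} {ω : Ω}
    (h : ∀ k < n, ∏ i ∈ Finset.range k, Y (e i) ω < c) :
    stoppedProd Y e c n ω = ∏ i ∈ Finset.range n, Y (e i) ω := by
  induction n with
  | zero => rfl
  | succ n ih =>
    have hn := ih fun k hk => h k (hk.trans n.lt_succ_self)
    rw [stoppedProd, hn, if_pos (h n n.lt_succ_self), Finset.prod_range_succ]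

lemma le_stoppedProd_succ {n : ℕ} {ω : Ω} (h : c ≤ stoppedProd Y e c n ω) :
    c ≤ stoppedProd Y e c (n + 1) ω := by
  rwa [stoppedProd, if_neg (not_lt.mpr h)]

lemma le_stoppedProd_of_le_prod {k n : ℕ} {ω : Ω} (hkn : k ≤ n)
    (hk : c ≤ ∏ i ∈ Finset.range k, Y (e i) ω) : c ≤ stoppedProd Y e c n ω := by
  classical
  have hex : ∃ k, c ≤ ∏ i ∈ Finset.range k, Y (e i) ω := ⟨k, hk⟩
  have hfirst : c ≤ stoppedProd Y e c (Nat.find hex) ω := by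
    rw [stoppedProd_eq_prod fun j hj => not_le.mp (Nat.find_min hex hj)]
    exact Nat.find_spec hex
  obtain ⟨d, hd⟩ := Nat.exists_eq_add_of_le ((Nat.find_min' hex hk).trans hkn)
  rw [hd]
  clear hd
  induction d with
  | zero => exact hfirst
  | succ d ih => exact le_stoppedProd_succ ih

lemma lintegral_stoppedProd_succ_le (hindep : iIndepFun Y P) (hY : ∀ i, Measurable (Y i))
    {n : ℕ} (hint : ∫⁻ ω, Y (e n) ω ∂P ≤ 1) (hfresh : e n ∉ e '' Set.Iio n) :
    ∫⁻ ω, stoppedProd Y e c (n + 1) ω ∂P ≤ ∫⁻ ω, stoppedProd Y e c n ω ∂P := by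
  set N := stoppedProd Y e c n
  set B := {ω | N ω < c}
  have hN : Measurable N := (measurable_stoppedProd n).mono (factorSigma_le hY n) le_rfl
  have hB : MeasurableSet B := measurableSet_lt hN measurable_const
  have hsplit : stoppedProd Y e c (n + 1)
      = fun ω => B.indicator N ω * Y (e n) ω + Bᶜ.indicator N ω := by
    funext ω
    by_cases hω : N ω < c
    · simp [stoppedProd, N, B, hω, Set.indicator_of_mem, Set.indicator_of_notMem]
    · simp [stoppedProd, N, B, hω]
  have hind : Indep (factorSigma Y e n)
      (⨆ i ∈ ({e n} : Set ι), MeasurableSpace.comap (Y i) inferInstance) P :=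
    indep_iSup_of_disjoint (fun i => (hY i).comap_le) hindep
      (Set.disjoint_singleton_right.mpr hfresh)
  have hprod : ∫⁻ ω, B.indicator N ω * Y (e n) ω ∂P
      = (∫⁻ ω in B, N ω ∂P) * ∫⁻ ω, Y (e n) ω ∂P := by
    rw [lintegral_mul_eq_lintegral_mul_lintegral_of_independent_measurableSpace
      (factorSigma_le hY n) (iSup₂_le fun i _ => (hY i).comap_le) hind, lintegral_indicator hB]
    · exact (measurable_stoppedProd n).indicator
        (measurableSet_lt (measurable_stoppedProd n) measurable_const)
    · exact (comap_measurable (Y (e n))).mono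
        (le_biSup (fun i => MeasurableSpace.comap (Y i) inferInstance) rfl) le_rfl
  calc ∫⁻ ω, stoppedProd Y e c (n + 1) ω ∂P
      = (∫⁻ ω in B, N ω ∂P) * ∫⁻ ω, Y (e n) ω ∂P + ∫⁻ ω in Bᶜ, N ω ∂P := by
        rw [hsplit, lintegral_add_right _ (hN.indicator hB.compl), hprod,
          lintegral_indicator hB.compl]
    _ ≤ (∫⁻ ω in B, N ω ∂P) * 1 + ∫⁻ ω in Bᶜ, N ω ∂P := by gcongr
    _ = ∫⁻ ω, N ω ∂P := by rw [mul_one, lintegral_add_compl _ hB]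

lemma lintegral_stoppedProd_le_one [IsProbabilityMeasure P] (hindep : iIndepFun Y P)
    (hY : ∀ i, Measurable (Y i)) (hint : ∀ i, ∫⁻ ω, Y i ω ∂P ≤ 1) {n : ℕ}
    (he : Set.InjOn e (Set.Iio n)) :
    ∫⁻ ω, stoppedProd Y e c n ω ∂P ≤ 1 := by
  induction n with
  | zero => simp [stoppedProd]
  | succ n ih =>
    have hfresh : e n ∉ e '' Set.Iio n := fun ⟨k, hk, hkn⟩ =>
      (Set.mem_Iio.mp hk).ne (he (Set.mem_Iio.mpr (hk.trans n.lt_succ_self))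
        (Set.mem_Iio.mpr n.lt_succ_self) hkn)
    exact (lintegral_stoppedProd_succ_le hindep hY (hint _) hfresh).trans
      (ih (he.mono (Set.Iio_subset_Iio n.le_succ)))

end StoppedProd

/-- Ville's maximal inequality for products of independent factors. -/
theorem mul_measure_exists_le_prod_le_one [IsProbabilityMeasure P] {Y : ι → Ω → ℝ≥0∞}
    (hindep : iIndepFun Y P) (hY : ∀ i, Measurable (Y i)) (hint : ∀ i, ∫⁻ ω, Y i ω ∂P ≤ 1)
    {e : ℕ → ι} {n : ℕ} (he : Set.InjOn e (Set.Iio n)) (c : ℝ≥0∞) :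
    c * P {ω | ∃ k ≤ n, c ≤ ∏ i ∈ Finset.range k, Y (e i) ω} ≤ 1 :=
  calc c * P {ω | ∃ k ≤ n, c ≤ ∏ i ∈ Finset.range k, Y (e i) ω}
      ≤ c * P {ω | c ≤ stoppedProd Y e c n ω} := by
        gcongr
        rintro ⟨k, hkn, hk⟩
        exact le_stoppedProd_of_le_prod hkn hk
    _ ≤ ∫⁻ ω, stoppedProd Y e c n ω ∂P :=
        mul_meas_ge_le_lintegral₀
          ((measurable_stoppedProd n).mono (factorSigma_le hY n) le_rfl).aemeasurable c
    _ ≤ 1 := lintegral_stoppedProd_le_one hindep hY hint he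

lemma lintegral_exp_sub_le_one_of_cgf_le {Z : Ω → ℝ} {θ r : ℝ}
    (hint : Integrable (fun ω => Real.exp (θ * Z ω)) P) (hcgf : cgf Z P θ ≤ θ * r) :
    ∫⁻ ω, ENNReal.ofReal (Real.exp (θ * (Z ω - r))) ∂P ≤ 1 := by
  have hmgf : mgf Z P θ ≤ Real.exp (θ * r) := by
    rcases (mgf_nonneg : 0 ≤ mgf Z P θ).eq_or_lt with h | h
    · rw [← h]; positivity
    · exact (Real.log_le_iff_le_exp h).mp hcgf
  have hexp : ∀ ω, Real.exp (θ * (Z ω - r)) = Real.exp (θ * Z ω) * Real.exp (-(θ * r)) :=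
    fun ω => by rw [← Real.exp_add]; ring_nf
  simp_rw [hexp]
  rw [← ofReal_integral_eq_lintegral_ofReal (hint.mul_const _)
      (ae_of_all _ fun ω => by positivity), integral_mul_const, ← mgf, ENNReal.ofReal_le_one]
  calc mgf Z P θ * Real.exp (-(θ * r)) ≤ Real.exp (θ * r) * Real.exp (-(θ * r)) := by gcongr
    _ = 1 := by rw [← Real.exp_add, add_neg_cancel, Real.exp_zero]

end ProbabilityTheory

end

lemma prod_ofReal_exp_increments_reflect (A : ℕ → ℝ) (θ r : ℝ) {k t : ℕ} (hk : k ≤ t) :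
    ∏ i ∈ Finset.range k,
        ENNReal.ofReal (Real.exp (θ * (A (t - (i + 1) + 1) - A (t - (i + 1)) - r)))
      = ENNReal.ofReal (Real.exp (θ * (A t - A (t - k) - r * k))) := by
  induction k with
  | zero => simp
  | succ k ih =>
    rw [Finset.prod_range_succ, ih (by omega), ← ENNReal.ofReal_mul (Real.exp_nonneg _),
      ← Real.exp_add, show t - (k + 1) + 1 = t - k by omega]
    push_cast
    ring_nf

lemma cgf_increment_le {Ω : Type*} [MeasurableSpace Ω] {P : Measure Ω} {A : ℕ → Ω → ℝ}
    {θ σ ρ r : ℝ} (hθ : 0 < θ) (hr : ρ + σ ≤ r) {j : ℕ}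
    (hconstr : (1 / θ) * Real.log (∫ ω, Real.exp (θ * (A (j + 1) ω - A j ω)) ∂P)
        ≤ ρ * ((j + 1 - j : ℕ) : ℝ) + σ) :
    cgf (fun ω => A (j + 1) ω - A j ω) P θ ≤ θ * r := by
  rw [one_div, inv_mul_le_iff₀ hθ, Nat.add_sub_cancel_left, Nat.cast_one, mul_one] at hconstr
  exact hconstr.trans (by gcongr)

theorem vb_arrival_curve_time_independent_general
    {Ω : Type*} [MeasurableSpace Ω] (P : Measure Ω) [IsProbabilityMeasure P]
    (A : ℕ → Ω → ℝ)
    (hAmeas : ∀ t, Measurable (A t))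
    (θ σ ρ : ℝ) (hθ : 0 < θ)
    (hInt : ∀ s t : ℕ, s ≤ t → Integrable (fun ω => Real.exp (θ * (A t ω - A s ω))) P)
    -- A is (σ(θ), ρ(θ))-upper constrained
    (hconstr : ∀ s t : ℕ, s ≤ t →
      (1 / θ) * Real.log (∫ ω, Real.exp (θ * (A t ω - A s ω)) ∂P)
        ≤ ρ * ((t - s : ℕ) : ℝ) + σ)
    -- the per-slot increments a(t) = A(t) − A(t−1) are mutually independent
    (hindep : iIndepFun
      (fun t : ℕ => fun ω => A (t + 1) ω - A t ω) P)
    (r : ℝ) (hr : ρ + σ ≤ r) :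
    ∀ t : ℕ, ∀ x : ℝ, 0 ≤ x →
      P {ω | (Finset.range (t + 1)).sup' Finset.nonempty_range_add_one
          (fun s => A t ω - A s ω - r * ((t - s : ℕ) : ℝ)) > x}
        ≤ ENNReal.ofReal (Real.exp (-θ * x)) := by
  intro t x _
  set Y : ℕ → Ω → ℝ≥0∞ := fun i ω => ENNReal.ofReal (Real.exp (θ * (A (i + 1) ω - A i ω - r)))
  have hYmeas : ∀ i, Measurable (Y i) := fun i => by fun_prop
  have hYindep : iIndepFun Y P :=
    hindep.comp (fun _ z => ENNReal.ofReal (Real.exp (θ * (z - r)))) fun _ => by fun_prop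
  have hYint : ∀ i, ∫⁻ ω, Y i ω ∂P ≤ 1 := fun i =>
    lintegral_exp_sub_le_one_of_cgf_le (hInt i (i + 1) i.le_succ)
      (cgf_increment_le hθ hr (hconstr i (i + 1) i.le_succ))
  have hreflect : Set.InjOn (fun i => t - (i + 1)) (Set.Iio t) := fun i hi j hj hij => by
    simp only [Set.mem_Iio] at hi hj hij; omega
  have hville := mul_measure_exists_le_prod_le_one hYindep hYmeas hYint hreflect
    (ENNReal.ofReal (Real.exp (θ * x)))
  rw [mul_comm, ← ENNReal.le_inv_iff_mul_le, ← ENNReal.ofReal_inv_of_pos (Real.exp_pos _),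
    ← Real.exp_neg, ← neg_mul] at hville
  refine (measure_mono fun ω hω => ?_).trans hville
  obtain ⟨s, hs, hxs⟩ := (Finset.lt_sup'_iff _).mp (show x < _ from hω)
  have hst : s ≤ t := Nat.lt_succ_iff.mp (Finset.mem_range.mp hs)
  refine ⟨t - s, t.sub_le s, ?_⟩
  rw [prod_ofReal_exp_increments_reflect (A · ω) θ r (t.sub_le s), Nat.sub_sub_self hst]
  gcongr

/-- **Proposition 1 (vb arrival curves of time-independent processes).**
If the process `A` is `(σ(θ), ρ(θ))`-upper constrained for some `θ > 0` and its per-slot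
increments `a(t) = A(t) − A(t−1)` are mutually independent, then for any
`r ≥ ρ(θ) + σ(θ)`, `A` has the vb stochastic arrival curve `α(t) = r·t`, `f(x) = e^{−θx}`. -/
theorem vb_arrival_curve_time_independent
    {Ω : Type*} [MeasurableSpace Ω] (P : Measure Ω) [IsProbabilityMeasure P]
    (A : ℕ → Ω → ℝ)
    (hA0 : ∀ ω, A 0 ω = 0)
    (hAnonneg : ∀ t ω, 0 ≤ A t ω)
    (hAmono : ∀ ω, Monotone fun t => A t ω)
    (hAmeas : ∀ t, Measurable (A t))
    (θ σ ρ : ℝ) (hθ : 0 < θ)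
    (hInt : ∀ s t : ℕ, s ≤ t → Integrable (fun ω => Real.exp (θ * (A t ω - A s ω))) P)
    -- A is (σ(θ), ρ(θ))-upper constrained
    (hconstr : ∀ s t : ℕ, s ≤ t →
      (1 / θ) * Real.log (∫ ω, Real.exp (θ * (A t ω - A s ω)) ∂P)
        ≤ ρ * ((t - s : ℕ) : ℝ) + σ)
    -- the per-slot increments a(t) = A(t) − A(t−1) are mutually independent
    (hindep : iIndepFun
      (fun t : ℕ => fun ω => A (t + 1) ω - A t ω) P)
    (r : ℝ) (hr : ρ + σ ≤ r) :
    ∀ t : ℕ, ∀ x : ℝ, 0 ≤ x →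
      P {ω | (Finset.range (t + 1)).sup' Finset.nonempty_range_add_one
          (fun s => A t ω - A s ω - r * ((t - s : ℕ) : ℝ)) > x}
        ≤ ENNReal.ofReal (Real.exp (-θ * x)) :=
  vb_arrival_curve_time_independent_general P A hAmeas θ σ ρ hθ hInt hconstr hindep r hr
end

section
/- Supermartingale lemma (Appendix A, step of Proposition 1). Suppose the process A is (σ(θ), ρ(θ))-upper constrained for some θ > 0 and the per-slot increments a(s) := A(s) − A(s−1), s ≥ 1, are mutually independent random variables. Fix t ∈ ℕ and let r ≥ ρ(θ) + σ(θ). Then the process X(s) := e^{θ(A(t−s, t) − r·s)}, for s = 0, 1, ..., t, is a supermartingale with respect to its natural filtration, and E[X(0)] = 1. -/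
/-!
Read backwards from `t`, the process `X` multiplies at each step `s < t` by the factor
`e^{θ(a(t-s) - r)}`, which depends only on the increment `a(t-s) = A(t-s) - A(t-s-1)`.
The past `X(0), …, X(s)` is a function of the later increments `a(t-s+1), …, a(t)`, so by
independence the conditional expectation of the factor is its mean, and the upper constraint over
a single slot bounds that mean by `e^{θ(ρ + σ - r)} ≤ 1`.
-/

open MeasureTheory ProbabilityTheory Filter

theorem le_exp_mul_of_inv_mul_log_le {θ x c : ℝ} (hθ : 0 < θ) (hx : 0 < x)
    (h : 1 / θ * Real.log x ≤ c) : x ≤ Real.exp (θ * c) := by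
  rw [← Real.log_le_iff_le_exp hx]
  rwa [one_div, inv_mul_le_iff₀ hθ] at h

theorem condExp_mul_le_of_indep {Ω : Type*} {m m' m0 : MeasurableSpace Ω} {μ : Measure Ω}
    [IsFiniteMeasure μ] {f g : Ω → ℝ} (hm : m ≤ m0) (hm' : m' ≤ m0)
    (hf : StronglyMeasurable[m] f) (hf0 : 0 ≤ f) (hg : StronglyMeasurable[m'] g)
    (hind : Indep m' m μ) (hfg : Integrable (f * g) μ) (hgint : Integrable g μ)
    (hg1 : μ[g] ≤ 1) : μ[f * g | m] ≤ᵐ[μ] f := by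
  filter_upwards [condExp_mul_of_stronglyMeasurable_left hf hfg hgint,
    condExp_indep_eq hm' hm hg hind] with ω hmul hconst
  rw [hmul, Pi.mul_apply, hconst]
  exact mul_le_of_le_one_right (hf0 ω) hg1

namespace ArrivalProcess

variable {Ω : Type*} {A : ℕ → Ω → ℝ} {θ : ℝ}

noncomputable def reversedExp (A : ℕ → Ω → ℝ) (θ r : ℝ) (t s : ℕ) (ω : Ω) : ℝ :=
  Real.exp (θ * ((A t ω - A (t - s) ω) - r * ((min s t : ℕ) : ℝ)))

theorem integrable_exp_mul_sub [MeasurableSpace Ω] {P : Measure Ω}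
    (hInt : ∀ s t : ℕ, s ≤ t → Integrable (fun ω => Real.exp (θ * (A t ω - A s ω))) P)
    {j k : ℕ} (hjk : j ≤ k) (c : ℝ) :
    Integrable (fun ω => Real.exp (θ * (A k ω - A j ω - c))) P := by
  simp only [mul_sub _ (A k _ - A j _) c, Real.exp_sub _ (θ * c)]
  exact (hInt j k hjk).div_const _

theorem integral_exp_mul_sub_le_one [MeasurableSpace Ω] {P : Measure Ω} [IsProbabilityMeasure P]
    {σ ρ r : ℝ} (hθ : 0 < θ)
    (hInt : ∀ s t : ℕ, s ≤ t → Integrable (fun ω => Real.exp (θ * (A t ω - A s ω))) P)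
    (hconstr : ∀ s t : ℕ, s ≤ t →
      (1 / θ) * Real.log (∫ ω, Real.exp (θ * (A t ω - A s ω)) ∂P) ≤ ρ * ((t - s : ℕ) : ℝ) + σ)
    (hr : ρ + σ ≤ r) {j k : ℕ} (hjk : j + 1 = k) :
    ∫ ω, Real.exp (θ * (A k ω - A j ω - r)) ∂P ≤ 1 := by
  have hslot : ∫ ω, Real.exp (θ * (A k ω - A j ω)) ∂P ≤ Real.exp (θ * (ρ + σ)) := by
    have h := hconstr j k (by omega)
    rw [show k - j = 1 by omega, Nat.cast_one, mul_one] at h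
    exact le_exp_mul_of_inv_mul_log_le hθ (integral_exp_pos (hInt j k (by omega))) h
  simp only [mul_sub _ (A k _ - A j _) r, Real.exp_sub _ (θ * r)]
  rw [integral_div, div_le_one (Real.exp_pos _)]
  exact hslot.trans (Real.exp_le_exp.2 (mul_le_mul_of_nonneg_left hr hθ.le))

theorem reversedExp_succ_of_lt {r : ℝ} {t s : ℕ} (hst : s < t) :
    reversedExp A θ r t (s + 1) =
      reversedExp A θ r t s * fun ω => Real.exp (θ * (A (t - s) ω - A (t - (s + 1)) ω - r)) := by
  ext ω
  simp only [reversedExp, Pi.mul_apply, ← Real.exp_add, min_eq_left (Nat.succ_le_of_lt hst),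
    min_eq_left hst.le]
  push_cast
  ring_nf

theorem reversedExp_succ_of_le {r : ℝ} {t s : ℕ} (hts : t ≤ s) :
    reversedExp A θ r t (s + 1) = reversedExp A θ r t s := by
  ext ω
  simp only [reversedExp, min_eq_right hts, min_eq_right (hts.trans s.le_succ),
    Nat.sub_eq_zero_of_le hts, Nat.sub_eq_zero_of_le (hts.trans s.le_succ)]

theorem measurable_reversedExp_of_le [MeasurableSpace Ω] (r : ℝ) {t s j : ℕ} (hjs : j ≤ s) :
    Measurable[⨆ k ∈ Set.Ico (t - s) t,
      MeasurableSpace.comap (fun ω => A (k + 1) ω - A k ω) inferInstance]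
      (reversedExp A θ r t j) := by
  have hincr : ∀ k ∈ Finset.Ico (t - j) t, Measurable[⨆ k ∈ Set.Ico (t - s) t,
      MeasurableSpace.comap (fun ω => A (k + 1) ω - A k ω) inferInstance]
      (fun ω => A (k + 1) ω - A k ω) := by
    intro k hk
    rw [Finset.mem_Ico] at hk
    refine (comap_measurable _).mono (le_iSup₂_of_le k ?_ le_rfl) le_rfl
    exact ⟨(Nat.sub_le_sub_left hjs t).trans hk.1, hk.2⟩
  have hsum : reversedExp A θ r t j = fun ω =>
      Real.exp (θ * ((∑ k ∈ Finset.Ico (t - j) t, (A (k + 1) ω - A k ω)) - r * (min j t : ℕ))) := by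
    ext ω
    rw [reversedExp, Finset.sum_Ico_sub (fun n => A n ω) (Nat.sub_le t j)]
  rw [hsum]
  exact Real.measurable_exp.comp (((Finset.measurable_sum _ hincr).sub_const _).const_mul θ)

theorem indep_comap_increment_natural [MeasurableSpace Ω] {P : Measure Ω} [IsProbabilityMeasure P]
    (hAmeas : ∀ t, Measurable (A t))
    (hindep : iIndepFun (fun s : ℕ => fun ω => A (s + 1) ω - A s ω) P) (r : ℝ) {t s : ℕ}
    (hst : s < t) (hmeas : ∀ s, StronglyMeasurable (reversedExp A θ r t s)) :
    Indep (MeasurableSpace.comap (fun ω => A (t - s) ω - A (t - (s + 1)) ω) inferInstance)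
      (Filtration.natural (reversedExp A θ r t) hmeas s) P := by
  have hdisj : Disjoint {t - (s + 1)} (Set.Ico (t - s) t) := by
    simp only [Set.disjoint_singleton_left, Set.mem_Ico]
    omega
  have h := indep_iSup_of_disjoint (fun k => ((hAmeas (k + 1)).sub (hAmeas k)).comap_le)
    hindep hdisj
  rw [iSup_singleton, show t - (s + 1) + 1 = t - s by omega] at h
  refine indep_of_indep_of_le_right h (iSup₂_le fun j hjs => ?_)
  exact (measurable_reversedExp_of_le r hjs).comap_le

end ArrivalProcess

open ArrivalProcess in
theorem supermartingale_of_upper_constrained_general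
    {Ω : Type*} [MeasurableSpace Ω] (P : Measure Ω) [IsProbabilityMeasure P]
    (A : ℕ → Ω → ℝ)
    (hAmeas : ∀ t, Measurable (A t))
    (θ σ ρ : ℝ) (hθ : 0 < θ)
    (hInt : ∀ s t : ℕ, s ≤ t → Integrable (fun ω => Real.exp (θ * (A t ω - A s ω))) P)
    -- A is (σ(θ), ρ(θ))-upper constrained
    (hconstr : ∀ s t : ℕ, s ≤ t →
      (1 / θ) * Real.log (∫ ω, Real.exp (θ * (A t ω - A s ω)) ∂P)
        ≤ ρ * ((t - s : ℕ) : ℝ) + σ)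
    -- the per-slot increments a(s) = A(s) − A(s−1) are mutually independent
    (hindep : iIndepFun
      (fun s : ℕ => fun ω => A (s + 1) ω - A s ω) P)
    (t : ℕ) (r : ℝ) (hr : ρ + σ ≤ r)
    -- X(s) = e^{θ(A(t−s,t) − r·s)} for s = 0, …, t (constant after s = t)
    (X : ℕ → Ω → ℝ)
    (hX : ∀ s ω, X s ω =
      Real.exp (θ * ((A t ω - A (t - s) ω) - r * ((min s t : ℕ) : ℝ))))
    (hXmeas : ∀ s, StronglyMeasurable (X s)) :
    Supermartingale X (MeasureTheory.Filtration.natural X hXmeas) P ∧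
      (∫ ω, X 0 ω ∂P) = 1 := by
  obtain rfl : X = reversedExp A θ r t := funext fun s => funext (hX s)
  have hadapted := Filtration.stronglyAdapted_natural hXmeas
  have hint : ∀ s, Integrable (reversedExp A θ r t s) P := fun s =>
    integrable_exp_mul_sub hInt (Nat.sub_le t s) _
  refine ⟨supermartingale_nat hadapted hint fun s => ?_, by simp [reversedExp]⟩
  rcases lt_or_ge s t with hst | hts
  · have hfactor := reversedExp_succ_of_lt (A := A) (θ := θ) (r := r) hst
    rw [hfactor]
    refine condExp_mul_le_of_indep ((Filtration.natural _ hXmeas).le s)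
      ((hAmeas _).sub (hAmeas _)).comap_le (hadapted s) (fun ω => (Real.exp_pos _).le) ?_
      (indep_comap_increment_natural hAmeas hindep r hst hXmeas) (hfactor ▸ hint (s + 1))
      (integrable_exp_mul_sub hInt (by omega) r)
      (integral_exp_mul_sub_le_one hθ hInt hconstr hr (by omega))
    exact (Real.measurable_exp.comp
      (((comap_measurable _).sub_const r).const_mul θ)).stronglyMeasurable
  · rw [reversedExp_succ_of_le hts,
      condExp_of_stronglyMeasurable ((Filtration.natural _ hXmeas).le s) (hadapted s) (hint s)]

/-- **Supermartingale lemma (Appendix A, step of Proposition 1).**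
If `A` is `(σ(θ), ρ(θ))`-upper constrained for some `θ > 0` with mutually independent per-slot
increments, `t ∈ ℕ` is fixed and `r ≥ ρ(θ) + σ(θ)`, then `X(s) = e^{θ(A(t−s,t) − r·s)}`
(for `s = 0, …, t`, and kept constant after time `t`) is a supermartingale with respect to its
natural filtration, and `E[X(0)] = 1`. -/
theorem supermartingale_of_upper_constrained
    {Ω : Type*} [MeasurableSpace Ω] (P : Measure Ω) [IsProbabilityMeasure P]
    (A : ℕ → Ω → ℝ)
    (hA0 : ∀ ω, A 0 ω = 0)
    (hAnonneg : ∀ t ω, 0 ≤ A t ω)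
    (hAmono : ∀ ω, Monotone fun t => A t ω)
    (hAmeas : ∀ t, Measurable (A t))
    (θ σ ρ : ℝ) (hθ : 0 < θ)
    (hInt : ∀ s t : ℕ, s ≤ t → Integrable (fun ω => Real.exp (θ * (A t ω - A s ω))) P)
    -- A is (σ(θ), ρ(θ))-upper constrained
    (hconstr : ∀ s t : ℕ, s ≤ t →
      (1 / θ) * Real.log (∫ ω, Real.exp (θ * (A t ω - A s ω)) ∂P)
        ≤ ρ * ((t - s : ℕ) : ℝ) + σ)
    -- the per-slot increments a(s) = A(s) − A(s−1) are mutually independent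
    (hindep : iIndepFun
      (fun s : ℕ => fun ω => A (s + 1) ω - A s ω) P)
    (t : ℕ) (r : ℝ) (hr : ρ + σ ≤ r)
    -- X(s) = e^{θ(A(t−s,t) − r·s)} for s = 0, …, t (constant after s = t)
    (X : ℕ → Ω → ℝ)
    (hX : ∀ s ω, X s ω =
      Real.exp (θ * ((A t ω - A (t - s) ω) - r * ((min s t : ℕ) : ℝ))))
    (hXmeas : ∀ s, StronglyMeasurable (X s)) :
    Supermartingale X (MeasureTheory.Filtration.natural X hXmeas) P ∧
      (∫ ω, X 0 ω ∂P) = 1 :=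
  supermartingale_of_upper_constrained_general P A hAmeas θ σ ρ hθ hInt hconstr hindep t r hr X hX
    hXmeas
end

section
/- Proposition 3 (equivalence of the optimized backlog bounds of Jiang's and Ciucu's models for a single server). Fix θ₁, θ₂ > 0, real constants σ_A, ρ_A, σ_I, ρ_I and c with ρ_A + ρ_I < c, and x ≥ 0. Define Jiang's optimized bound J(x) := inf over r_A > ρ_A, r_I > ρ_I with r_A + r_I = c of (f ⊗ g)(x), where f(y) = (e^{θ₁σ_A}/(1 − e^{θ₁(ρ_A − r_A)})) e^{−θ₁ y} and g(y) = (e^{θ₂σ_I}/(1 − e^{θ₂(ρ_I − r_I)})) e^{−θ₂ y}. Define Ciucu's optimized bound C(x) := inf over r_A ≥ ρ_A, r_I ≥ ρ_I, δ₁ > 0, δ₂ > 0 with r_A + r_I + δ₁ + δ₂ = c of (f̃ ⊗ g̃)(x), where f̃(y) = (e^{θ₁σ_A}/(1 − e^{−θ₁δ₁})) e^{−θ₁ y} and g̃(y) = (e^{θ₂σ_I}/(1 − e^{−θ₂δ₂})) e^{−θ₂ y}. Then J(x) = C(x). -/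
/-- Min-plus convolution of two bounding functions: `(f ⊗ g)(x) = inf_{0 ≤ y ≤ x} [f(y) + g(x−y)]`. -/
noncomputable def minConv (f g : ℝ → ℝ) (x : ℝ) : ℝ :=
  ⨅ y : Set.Icc (0 : ℝ) x, (f y.1 + g (x - y.1))

/-!
Jiang's parameters `(r_A, r_I)` are Ciucu's parameters `(ρ_A, ρ_I, r_A - ρ_A, r_I - ρ_I)`, so
every Jiang bound is a Ciucu bound. Conversely, Ciucu's parameters `(r_A, r_I, δ₁, δ₂)` give
Jiang's `(r_A + δ₁, r_I + δ₂)`, whose slacks `r_A + δ₁ - ρ_A ≥ δ₁` and `r_I + δ₂ - ρ_I ≥ δ₂` are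
larger; since the prefactor `e^{θσ} / (1 - e^{-θδ})` decreases in the slack `δ` and the min-plus
convolution is monotone, that Jiang bound is no larger. So both infima are over sets that
dominate each other.
-/

open Real

theorem csInf_eq_csInf_of_subset_of_forall_exists_le {α : Type*} [ConditionallyCompleteLattice α]
    {s t : Set α} (hs : s.Nonempty) (ht : BddBelow t) (hst : s ⊆ t)
    (hts : ∀ b ∈ t, ∃ a ∈ s, a ≤ b) : sInf s = sInf t := by
  refine le_antisymm (le_csInf (hs.mono hst) fun b hb => ?_) (csInf_le_csInf ht hs hst)
  obtain ⟨a, ha, hab⟩ := hts b hb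
  exact (csInf_le (ht.mono hst) ha).trans hab

section MinConv

variable {f g f' g' : ℝ → ℝ} {x : ℝ}

theorem minConv_nonneg (hf : ∀ y, 0 ≤ f y) (hg : ∀ y, 0 ≤ g y) : 0 ≤ minConv f g x :=
  Real.iInf_nonneg fun _ => add_nonneg (hf _) (hg _)

theorem minConv_mono (hf : ∀ y, 0 ≤ f y) (hg : ∀ y, 0 ≤ g y)
    (hff' : ∀ y, f y ≤ f' y) (hgg' : ∀ y, g y ≤ g' y) :
    minConv f g x ≤ minConv f' g' x :=
  ciInf_mono ⟨0, by rintro _ ⟨y, rfl⟩; exact add_nonneg (hf _) (hg _)⟩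
    fun _ => add_le_add (hff' _) (hgg' _)

end MinConv

/-- The bounding function `y ↦ e^{θσ} / (1 - e^{-θδ}) · e^{-θy}` of a vb arrival curve with
burst `σ`, decay rate `θ` and rate slack `δ`. -/
noncomputable def vbBound (θ σ δ : ℝ) (y : ℝ) : ℝ :=
  exp (θ * σ) / (1 - exp (-θ * δ)) * exp (-θ * y)

section VbBound

variable {θ δ δ' : ℝ}

theorem one_sub_exp_neg_mul_pos (hθ : 0 < θ) (hδ : 0 < δ) : 0 < 1 - exp (-θ * δ) := by
  have : exp (-θ * δ) < 1 := exp_lt_one_iff.2 (by nlinarith)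
  linarith

theorem vbBound_nonneg (hθ : 0 < θ) (hδ : 0 < δ) (σ y : ℝ) : 0 ≤ vbBound θ σ δ y := by
  have := one_sub_exp_neg_mul_pos hθ hδ
  unfold vbBound
  positivity

theorem vbBound_antitone_slack (hθ : 0 < θ) (hδ : 0 < δ) (hδδ' : δ ≤ δ') (σ y : ℝ) :
    vbBound θ σ δ' y ≤ vbBound θ σ δ y := by
  have hexp : exp (-θ * δ') ≤ exp (-θ * δ) := exp_le_exp.2 (by nlinarith)
  unfold vbBound
  gcongr
  exact one_sub_exp_neg_mul_pos hθ hδ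

theorem vbBound_sub (θ σ ρ r : ℝ) :
    vbBound θ σ (r - ρ) = fun y => exp (θ * σ) / (1 - exp (θ * (ρ - r))) * exp (-θ * y) := by
  funext y
  rw [vbBound, show -θ * (r - ρ) = θ * (ρ - r) by ring]

end VbBound

theorem jiang_ciucu_bounds_equivalent_general
    (θ₁ θ₂ σA ρA σI ρI c x : ℝ) (hθ₁ : 0 < θ₁) (hθ₂ : 0 < θ₂)
    (hc : ρA + ρI < c) :
    sInf {v : ℝ | ∃ rA rI : ℝ, ρA < rA ∧ ρI < rI ∧ rA + rI = c ∧
        v = minConv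
          (fun y => Real.exp (θ₁ * σA) / (1 - Real.exp (θ₁ * (ρA - rA))) * Real.exp (-θ₁ * y))
          (fun y => Real.exp (θ₂ * σI) / (1 - Real.exp (θ₂ * (ρI - rI))) * Real.exp (-θ₂ * y))
          x}
      = sInf {v : ℝ | ∃ rA rI δ₁ δ₂ : ℝ, ρA ≤ rA ∧ ρI ≤ rI ∧ 0 < δ₁ ∧ 0 < δ₂ ∧
          rA + rI + δ₁ + δ₂ = c ∧
          v = minConv
            (fun y => Real.exp (θ₁ * σA) / (1 - Real.exp (-θ₁ * δ₁)) * Real.exp (-θ₁ * y))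
            (fun y => Real.exp (θ₂ * σI) / (1 - Real.exp (-θ₂ * δ₂)) * Real.exp (-θ₂ * y))
            x} := by
  simp only [← vbBound_sub]
  refine csInf_eq_csInf_of_subset_of_forall_exists_le ?_ ?_ ?_ ?_
  · exact ⟨_, ρA + (c - ρA - ρI) / 2, ρI + (c - ρA - ρI) / 2, by linarith, by linarith, by ring,
      rfl⟩
  · refine ⟨0, ?_⟩
    rintro v ⟨rA, rI, δ₁, δ₂, -, -, hδ₁, hδ₂, -, rfl⟩
    exact minConv_nonneg (vbBound_nonneg hθ₁ hδ₁ σA) (vbBound_nonneg hθ₂ hδ₂ σI)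
  · rintro v ⟨rA, rI, hrA, hrI, hsum, rfl⟩
    exact ⟨ρA, ρI, rA - ρA, rI - ρI, le_rfl, le_rfl, sub_pos.2 hrA, sub_pos.2 hrI, by linarith,
      rfl⟩
  · rintro v ⟨rA, rI, δ₁, δ₂, hrA, hrI, hδ₁, hδ₂, hsum, rfl⟩
    refine ⟨_, ⟨rA + δ₁, rI + δ₂, by linarith, by linarith, by linarith, rfl⟩, ?_⟩
    exact minConv_mono
      (vbBound_nonneg hθ₁ (by linarith) σA) (vbBound_nonneg hθ₂ (by linarith) σI)
      (vbBound_antitone_slack hθ₁ hδ₁ (by linarith) σA)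
      (vbBound_antitone_slack hθ₂ hδ₂ (by linarith) σI)

/-- **Proposition 3 (equivalence of the optimized backlog bounds of Jiang's and Ciucu's models
for a single server).**  For `θ₁, θ₂ > 0`, `ρ_A + ρ_I < c` and `x ≥ 0`, Jiang's optimized
backlog-bound expression equals Ciucu's optimized backlog-bound expression. -/
theorem jiang_ciucu_bounds_equivalent
    (θ₁ θ₂ σA ρA σI ρI c x : ℝ) (hθ₁ : 0 < θ₁) (hθ₂ : 0 < θ₂)
    (hc : ρA + ρI < c) (hx : 0 ≤ x) :
    sInf {v : ℝ | ∃ rA rI : ℝ, ρA < rA ∧ ρI < rI ∧ rA + rI = c ∧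
        v = minConv
          (fun y => Real.exp (θ₁ * σA) / (1 - Real.exp (θ₁ * (ρA - rA))) * Real.exp (-θ₁ * y))
          (fun y => Real.exp (θ₂ * σI) / (1 - Real.exp (θ₂ * (ρI - rI))) * Real.exp (-θ₂ * y))
          x}
      = sInf {v : ℝ | ∃ rA rI δ₁ δ₂ : ℝ, ρA ≤ rA ∧ ρI ≤ rI ∧ 0 < δ₁ ∧ 0 < δ₂ ∧
          rA + rI + δ₁ + δ₂ = c ∧
          v = minConv
            (fun y => Real.exp (θ₁ * σA) / (1 - Real.exp (-θ₁ * δ₁)) * Real.exp (-θ₁ * y))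
            (fun y => Real.exp (θ₂ * σI) / (1 - Real.exp (-θ₂ * δ₂)) * Real.exp (-θ₂ * y))
            x} :=
  jiang_ciucu_bounds_equivalent_general θ₁ θ₂ σA ρA σI ρI c x hθ₁ hθ₂ hc
end
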